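/- Let (Σ, α, ρ) be a real contact manifold and γ: ℝ/τℤ → Σ a periodic Reeb orbit. Then γ is symmetric (i.e., ρ(im γ) = im γ) if and only if the image of γ intersects the fixed point set Fix(ρ). -/

import Mathlib

/-- Exterior derivative of a 1-form on a normed space, evaluated at `x` on vectors `u v`. -/
noncomputable def oneFormD {E : Type*} [NormedAddCommGroup E] [NormedSpace ℝ E]
    (ω : E → E →L[ℝ] ℝ) (x u v : E) : ℝ :=
  fderiv ℝ (fun y => ω y v) x u - fderiv ℝ (fun y => ω y u) x v



section aux
variable {E : Type*} [NormedAddCommGroup E] [NormedSpace ℝ E]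

lemma fderiv_apply_const (α : E → E →L[ℝ] ℝ) (hα : ContDiff ℝ (⊤ : ℕ∞) α) (x u v : E) :
    fderiv ℝ (fun y => α y v) x u = (fderiv ℝ α x u) v := by
  have h1 : HasFDerivAt α (fderiv ℝ α x) x :=
    (hα.differentiable (by simp) x).hasFDerivAt
  have h2 := h1.clm_apply (hasFDerivAt_const v x)
  rw [h2.fderiv]
  simp

lemma oneFormD_eq (α : E → E →L[ℝ] ℝ) (hα : ContDiff ℝ (⊤ : ℕ∞) α) (x u v : E) :
    oneFormD α x u v = (fderiv ℝ α x u) v - (fderiv ℝ α x v) u := by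
  rw [oneFormD, fderiv_apply_const α hα, fderiv_apply_const α hα]

end aux
section aux2
variable {E : Type*} [NormedAddCommGroup E] [NormedSpace ℝ E]

lemma pullback_oneFormD (α : E → E →L[ℝ] ℝ) (ρ : E → E)
    (hα : ContDiff ℝ (⊤ : ℕ∞) α) (hρ : ContDiff ℝ (⊤ : ℕ∞) ρ) (x u v : E) :
    fderiv ℝ (fun y => α (ρ y) (fderiv ℝ ρ y v)) x u
      - fderiv ℝ (fun y => α (ρ y) (fderiv ℝ ρ y u)) x v
      = oneFormD α (ρ x) (fderiv ℝ ρ x u) (fderiv ℝ ρ x v) := by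
  have hρi : ContDiff ℝ (↑(⊤:ℕ∞)) ρ := hρ.of_le (by simp)
  have hρd : Differentiable ℝ ρ := hρ.differentiable (by simp)
  have hρ' : ContDiff ℝ (↑(⊤:ℕ∞)) (fderiv ℝ ρ) := (contDiff_infty_iff_fderiv.mp hρi).2
  set ρ'' : E →L[ℝ] E →L[ℝ] E := fderiv ℝ (fderiv ℝ ρ) x with hρ''def
  have hsym : ∀ a b : E, ρ'' a b = ρ'' b a := by
    intro a b
    exact second_derivative_symmetric (f := ρ) (fun y => (hρd y).hasFDerivAt)
      ((hρ'.differentiable (by simp) x).hasFDerivAt) a b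
  -- derivative of y ↦ α (ρ y)
  have hA : ∀ w : E, HasFDerivAt (fun y => α (ρ y) (fderiv ℝ ρ y w))
      (((α (ρ x)).comp (ρ''.flip w)) + ((fderiv ℝ α (ρ x)).comp (fderiv ℝ ρ x)).flip
        (fderiv ℝ ρ x w)) x := by
    intro w
    have h1 : HasFDerivAt (fun y => α (ρ y))
        ((fderiv ℝ α (ρ x)).comp (fderiv ℝ ρ x)) x :=
      ((hα.differentiable (by simp) (ρ x)).hasFDerivAt).comp x (hρd x).hasFDerivAt
    have h2 : HasFDerivAt (fun y => fderiv ℝ ρ y w) (ρ''.flip w) x := by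
      have h3 : HasFDerivAt (fderiv ℝ ρ) ρ'' x :=
        (hρ'.differentiable (by simp) x).hasFDerivAt
      have := h3.clm_apply (hasFDerivAt_const w x)
      simpa using this
    simpa using h1.clm_apply h2
  rw [(hA v).fderiv, (hA u).fderiv, oneFormD_eq α hα]
  simp only [ContinuousLinearMap.add_apply, ContinuousLinearMap.comp_apply,
    ContinuousLinearMap.flip_apply]
  rw [hsym u v]
  ring

lemma involution_fderiv (ρ : E → E) (hρ : ContDiff ℝ (⊤ : ℕ∞) ρ) (hinv : ∀ x, ρ (ρ x) = x)
    (x v : E) : fderiv ℝ ρ (ρ x) (fderiv ℝ ρ x v) = v := by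
  have hρd : Differentiable ℝ ρ := hρ.differentiable (by simp)
  have h1 : HasFDerivAt (fun y => ρ (ρ y))
      ((fderiv ℝ ρ (ρ x)).comp (fderiv ℝ ρ x)) x :=
    (hρd (ρ x)).hasFDerivAt.comp x (hρd x).hasFDerivAt
  have h2 : HasFDerivAt (fun y : E => y) ((fderiv ℝ ρ (ρ x)).comp (fderiv ℝ ρ x)) x := by
    apply h1.congr_of_eventuallyEq
    filter_upwards with y using (hinv y).symm
  have := h2.fderiv
  rw [fderiv_id'] at this
  have : (fderiv ℝ ρ (ρ x)).comp (fderiv ℝ ρ x) = ContinuousLinearMap.id ℝ E := this.symm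
  calc fderiv ℝ ρ (ρ x) (fderiv ℝ ρ x v)
      = ((fderiv ℝ ρ (ρ x)).comp (fderiv ℝ ρ x)) v := rfl
    _ = v := by rw [this]; rfl

end aux2
section main
variable {E : Type*} [NormedAddCommGroup E] [NormedSpace ℝ E]

lemma oneFormD_neg_left (α : E → E →L[ℝ] ℝ) (hα : ContDiff ℝ (⊤ : ℕ∞) α) (x u v : E) :
    oneFormD α x (-u) v = - oneFormD α x u v := by
  rw [oneFormD_eq α hα, oneFormD_eq α hα]
  simp
  ring

lemma key_fderiv (α : E → E →L[ℝ] ℝ) (R : E → E) (ρ : E → E)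
    (hα : ContDiff ℝ (⊤ : ℕ∞) α) (hρ : ContDiff ℝ (⊤ : ℕ∞) ρ)
    (hR1 : ∀ x, α x (R x) = 1)
    (hR2 : ∀ x v, oneFormD α x (R x) v = 0)
    (hRuniq : ∀ R' : E → E, (∀ x, α x (R' x) = 1) → (∀ x v, oneFormD α x (R' x) v = 0) →
      R' = R)
    (hinv : ∀ x, ρ (ρ x) = x)
    (hanti : ∀ x v, α (ρ x) (fderiv ℝ ρ x v) = - α x v) :
    ∀ x, fderiv ℝ ρ x (R x) = - R (ρ x) := by
  -- anti-invariance of the exterior derivative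
  have hdanti : ∀ x u v, oneFormD α (ρ x) (fderiv ℝ ρ x u) (fderiv ℝ ρ x v)
      = - oneFormD α x u v := by
    intro x u v
    rw [← pullback_oneFormD α ρ hα hρ]
    have heq : ∀ w : E, (fun y => α (ρ y) (fderiv ℝ ρ y w)) = fun y => -(α y w) := by
      intro w; funext y; exact hanti y w
    rw [heq u, heq v, oneFormD]
    have hd : ∀ w : E, fderiv ℝ (fun y => -(α y w)) x = -(fderiv ℝ (fun y => α y w) x) := by
      intro w
      rw [fderiv_fun_neg]
    rw [hd u, hd v]
    simp
    ring
  set R' : E → E := fun y => -(fderiv ℝ ρ (ρ y) (R (ρ y))) with hR'def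
  have h1 : ∀ y, α y (R' y) = 1 := by
    intro y
    have := hanti (ρ y) (R (ρ y))
    rw [hinv y, hR1 (ρ y)] at this
    simp [hR'def, this]
  have h2 : ∀ y v, oneFormD α y (R' y) v = 0 := by
    intro y v
    rw [hR'def]
    rw [oneFormD_neg_left α hα]
    have hv : v = fderiv ℝ ρ (ρ y) (fderiv ℝ ρ y v) := (involution_fderiv ρ hρ hinv y v).symm
    rw [show oneFormD α y (fderiv ℝ ρ (ρ y) (R (ρ y))) v
        = oneFormD α (ρ (ρ y)) (fderiv ℝ ρ (ρ y) (R (ρ y)))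
            (fderiv ℝ ρ (ρ y) (fderiv ℝ ρ y v)) by rw [hinv y, ← hv]]
    rw [hdanti (ρ y) (R (ρ y)) (fderiv ℝ ρ y v), hR2]
    simp
  have hRR : R' = R := hRuniq R' h1 h2
  intro x
  have := congrFun hRR (ρ x)
  rw [hR'def] at this
  simp only [hinv x] at this
  rw [← this]
  simp

end main
section refl
variable {E : Type*} [NormedAddCommGroup E] [NormedSpace ℝ E]

lemma reflect_orbit (R : E → E) (ρ : E → E) (hρ : ContDiff ℝ (⊤ : ℕ∞) ρ)
    (hkey : ∀ x, fderiv ℝ ρ x (R x) = - R (ρ x))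
    (hODEuniq : ∀ c₁ c₂ : ℝ → E, (∀ t, HasDerivAt c₁ (R (c₁ t)) t) →
      (∀ t, HasDerivAt c₂ (R (c₂ t)) t) → c₁ 0 = c₂ 0 → c₁ = c₂)
    (γ : ℝ → E) (hγ : ∀ t, HasDerivAt γ (R (γ t)) t)
    (a b : ℝ) (hab : ρ (γ a) = γ b) :
    ∀ t, ρ (γ (a + b - t)) = γ t := by
  set c : ℝ → E := fun t => ρ (γ (a + b - t)) with hcdef
  have hc : ∀ t, HasDerivAt c (R (c t)) t := by
    intro t
    have hlin : HasDerivAt (fun s : ℝ => a + b - s) (-1) t := by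
      simpa using (hasDerivAt_id t).const_sub (a + b)
    have hin : HasDerivAt (fun s : ℝ => γ (a + b - s)) (-(R (γ (a + b - t)))) t := by
      have := (hγ (a + b - t)).scomp t hlin
      simpa [Function.comp_def] using this
    have hout : HasDerivAt c
        (fderiv ℝ ρ (γ (a + b - t)) (-(R (γ (a + b - t))))) t := by
      have hρfd : HasFDerivAt ρ (fderiv ℝ ρ (γ (a + b - t))) (γ (a + b - t)) :=
        (hρ.differentiable (by simp) _).hasFDerivAt
    -- compose
      exact hρfd.comp_hasDerivAt t hin
    have : fderiv ℝ ρ (γ (a + b - t)) (-(R (γ (a + b - t)))) = R (c t) := by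
      rw [map_neg, hkey]
      simp [hcdef]
    rwa [this] at hout
  -- shifted uniqueness
  have hshift : (fun t => c (t + b)) = (fun t => γ (t + b)) := by
    apply hODEuniq
    · intro t
      have hl : HasDerivAt (fun s : ℝ => s + b) 1 t := by
        simpa using (hasDerivAt_id t).add_const b
      have := (hc (t + b)).scomp t hl
      simpa [Function.comp_def] using this
    · intro t
      have hl : HasDerivAt (fun s : ℝ => s + b) 1 t := by
        simpa using (hasDerivAt_id t).add_const b
      have := (hγ (t + b)).scomp t hl
      simpa [Function.comp_def] using this
    · simp only [zero_add]
      simp [hcdef, hab]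
  intro t
  have := congrFun hshift (t - b)
  simpa [hcdef] using this

end refl

/-- A periodic Reeb orbit on a real contact manifold `(Σ, α, ρ)` is symmetric
(its image is `ρ`-invariant) iff its image intersects `Fix(ρ)`. -/
theorem stmt3 {E : Type*} [NormedAddCommGroup E] [NormedSpace ℝ E]
    (α : E → E →L[ℝ] ℝ) (R : E → E) (ρ : E → E)
    (hα : ContDiff ℝ (⊤ : ℕ∞) α) (hρ : ContDiff ℝ (⊤ : ℕ∞) ρ) (hR : ContDiff ℝ (⊤ : ℕ∞) R)
    -- `R` is the Reeb vector field of `α`: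
    (hR1 : ∀ x, α x (R x) = 1)
    (hR2 : ∀ x v, oneFormD α x (R x) v = 0)
    (hRuniq : ∀ R' : E → E, (∀ x, α x (R' x) = 1) → (∀ x v, oneFormD α x (R' x) v = 0) →
      R' = R)
    -- uniqueness of solutions of the Reeb ODE:
    (hODEuniq : ∀ c₁ c₂ : ℝ → E, (∀ t, HasDerivAt c₁ (R (c₁ t)) t) →
      (∀ t, HasDerivAt c₂ (R (c₂ t)) t) → c₁ 0 = c₂ 0 → c₁ = c₂)
    -- `ρ` is an anti-contact involution:
    (hinv : ∀ x, ρ (ρ x) = x)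
    (hanti : ∀ x v, α (ρ x) (fderiv ℝ ρ x v) = - α x v)
    -- `γ` is a `τ`-periodic Reeb orbit:
    (γ : ℝ → E) (τ : ℝ) (hτ : 0 < τ)
    (hγ : ∀ t, HasDerivAt γ (R (γ t)) t)
    (hper : ∀ t, γ (t + τ) = γ t) :
    ρ '' Set.range γ = Set.range γ ↔ ∃ t, ρ (γ t) = γ t := by
  have hkey := key_fderiv α R ρ hα hρ hR1 hR2 hRuniq hinv hanti
  constructor
  · intro h
    have h0 : ρ (γ 0) ∈ Set.range γ := by
      rw [← h]
      exact ⟨γ 0, ⟨0, rfl⟩, rfl⟩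
    obtain ⟨t₀, ht₀⟩ := h0
    have hrefl := reflect_orbit R ρ hρ hkey hODEuniq γ hγ 0 t₀ ht₀.symm
    refine ⟨t₀ / 2, ?_⟩
    have := hrefl (t₀ / 2)
    rw [show (0:ℝ) + t₀ - t₀ / 2 = t₀ / 2 by ring] at this
    exact this
  · rintro ⟨t₀, ht₀⟩
    have hrefl := reflect_orbit R ρ hρ hkey hODEuniq γ hγ t₀ t₀ ht₀
    ext p
    constructor
    · rintro ⟨q, ⟨s, rfl⟩, rfl⟩
      refine ⟨t₀ + t₀ - s, ?_⟩
      have := hrefl (t₀ + t₀ - s)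
      rw [show t₀ + t₀ - (t₀ + t₀ - s) = s by ring] at this
      exact this.symm
    · rintro ⟨s, rfl⟩
      exact ⟨γ (t₀ + t₀ - s), ⟨t₀ + t₀ - s, rfl⟩, hrefl s⟩
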